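/- arXiv:1906.00920 — 3 statements merged into one kernel-verified Lean document; each statement's English description precedes it below -/
import Mathlib

section
/- Let v⁰, v¹, …, vⁿ ∈ ℝⁿ be affinely independent points, let S = convexHull{v⁰, …, vⁿ} be the n-simplex they span, let p : S → ℝ be convex, and let L : ℝⁿ → ℝ be the unique affine function with L(vⁱ) = p(vⁱ) for i = 0, …, n. Then (i) L(x) ≥ p(x) for all x ∈ S, and (ii) for every concave function q : S → ℝ with q(x) ≥ p(x) for all x ∈ S, one has q(x) ≥ L(x) for all x ∈ S. Hence L is the concave envelope of p over S. -/
/-- The concave envelope of a convex function over an `n`-simplex is the unique affine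
function interpolating its vertex values: that affine function dominates `p` on the
simplex and is dominated by every concave function dominating `p` there. -/
theorem affine_interpolant_is_concave_envelope
    {n : ℕ} (v : Fin (n + 1) → (Fin n → ℝ)) (hv : AffineIndependent ℝ v)
    (p : (Fin n → ℝ) → ℝ) (hp : ConvexOn ℝ (convexHull ℝ (Set.range v)) p)
    (L : (Fin n → ℝ) →ᵃ[ℝ] ℝ) (hL : ∀ i, L (v i) = p (v i)) :
    (∀ x ∈ convexHull ℝ (Set.range v), p x ≤ L x) ∧
      (∀ q : (Fin n → ℝ) → ℝ, ConcaveOn ℝ (convexHull ℝ (Set.range v)) q →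
        (∀ x ∈ convexHull ℝ (Set.range v), p x ≤ q x) →
        ∀ x ∈ convexHull ℝ (Set.range v), L x ≤ q x) := by
  have hmemv : ∀ i : Fin (n + 1), v i ∈ convexHull ℝ (Set.range v) := fun i =>
    subset_convexHull ℝ _ (Set.mem_range_self i)
  have key : ∀ x ∈ convexHull ℝ (Set.range v),
      ∃ (s : Finset (Fin (n + 1))) (w : Fin (n + 1) → ℝ),
        (∀ i ∈ s, 0 ≤ w i) ∧ s.sum w = 1 ∧ (∑ i ∈ s, w i • v i) = x ∧
          L x = ∑ i ∈ s, w i • p (v i) := by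
    intro x hx
    rw [convexHull_range_eq_exists_affineCombination] at hx
    obtain ⟨s, w, hw₀, hw₁, rfl⟩ := hx
    refine ⟨s, w, hw₀, hw₁, ?_, ?_⟩
    · rw [Finset.affineCombination_eq_linear_combination s v w hw₁]
    · rw [Finset.map_affineCombination s v w hw₁,
        Finset.affineCombination_eq_linear_combination _ _ _ hw₁]
      simp [hL]
  constructor
  · intro x hx
    obtain ⟨s, w, hw₀, hw₁, hsum, hLx⟩ := key x hx
    rw [hLx, ← hsum]
    exact hp.map_sum_le hw₀ hw₁ fun i _ => hmemv i
  · intro q hq hpq x hx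
    obtain ⟨s, w, hw₀, hw₁, hsum, hLx⟩ := key x hx
    rw [hLx, ← hsum]
    calc ∑ i ∈ s, w i • p (v i) ≤ ∑ i ∈ s, w i • q (v i) :=
          Finset.sum_le_sum fun i hi =>
            smul_le_smul_of_nonneg_left (hpq _ (hmemv i)) (hw₀ i hi)
      _ ≤ q (∑ i ∈ s, w i • v i) := hq.le_map_sum hw₀ hw₁ fun i _ => hmemv i
end

section
/- Let ρ ∈ (−1, 1) and let C be the 3×3 matrix with C₁₁ = C₂₂ = C₃₃ = 1, C₁₂ = C₂₁ = ρ, and C₁₃ = C₃₁ = C₂₃ = C₃₂ = 0. Suppose w = (w₁, w₂, w₃) satisfies w₁, w₂, w₃ > 0, w₁ + w₂ + w₃ = 1, and the equal risk contribution conditions w₁(Cw)₁ = w₂(Cw)₂ = w₃(Cw)₃. Then w₃ = (2√(1+ρ) − (1+ρ)) / (3 − ρ). -/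
/-- Closed form for the third weight of the risk parity portfolio in the three-asset
toy example with correlation `ρ` between the first two assets. -/
theorem risk_parity_weight_three_assets
    (ρ : ℝ) (hρ : ρ ∈ Set.Ioo (-1 : ℝ) 1)
    (C : Matrix (Fin 3) (Fin 3) ℝ)
    (hC : C = Matrix.of ![![1, ρ, 0], ![ρ, 1, 0], ![0, 0, 1]])
    (w : Fin 3 → ℝ) (hpos : ∀ i, 0 < w i) (hsum : w 0 + w 1 + w 2 = 1)
    (h01 : w 0 * (C.mulVec w) 0 = w 1 * (C.mulVec w) 1)
    (h12 : w 1 * (C.mulVec w) 1 = w 2 * (C.mulVec w) 2) :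
    w 2 = (2 * Real.sqrt (1 + ρ) - (1 + ρ)) / (3 - ρ) := by
  obtain ⟨hρ1, hρ2⟩ := hρ
  subst hC
  simp [Matrix.mulVec, dotProduct, Fin.sum_univ_three] at h01 h12
  have h0 := hpos 0
  have h1 := hpos 1
  have h2 := hpos 2
  have hpos1ρ : (0:ℝ) < 1 + ρ := by linarith
  set s := Real.sqrt (1 + ρ) with hs
  have hs2 : s ^ 2 = 1 + ρ := Real.sq_sqrt hpos1ρ.le
  have hsnn : 0 ≤ s := Real.sqrt_nonneg _
  have hslt : s < 2 := by nlinarith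
  -- w0 = w1
  have he : w 0 = w 1 := by nlinarith
  -- w2 = s * w1
  have hw2 : w 2 = s * w 1 := by
    have hsq : (w 2) ^ 2 = (s * w 1) ^ 2 := by linear_combination -w 1 ^ 2 * hs2 - h12 + ρ * w 1 * he
    have hfac : (w 2 - s * w 1) * (w 2 + s * w 1) = 0 := by linear_combination hsq
    rcases mul_eq_zero.mp hfac with h | h
    · linarith
    · nlinarith [mul_nonneg hsnn h1.le]
  have hden : (3 : ℝ) - ρ ≠ 0 := by linarith
  rw [eq_div_iff hden]
  nlinarith [hw2, hs2]
end

section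
/- Let v⁰, v¹, …, vⁿ be affinely independent points in ℝⁿ and let M = convexHull{v⁰, …, vⁿ}. Let p ∈ M with p ∉ {v⁰, …, vⁿ}, and write p = Σᵢ₌₀ⁿ λᵢvⁱ with λᵢ ≥ 0 and Σᵢ λᵢ = 1 (this representation is unique). For each i with λᵢ > 0, let M(i, p) = convexHull({v⁰, …, vⁿ} \ {vⁱ} ∪ {p}). Then M equals the union of the sets M(i, p) over all i with λᵢ > 0, and each such M(i, p) is again an n-simplex, i.e. its vertex set is affinely independent. -/
/-- Radial subdivision of an `n`-simplex: subdividing at a non-vertex point `p` of the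
simplex yields a covering of the simplex by the subsimplices `M(i, p)` (obtained by
replacing vertex `vⁱ` by `p`, for `i` with `λᵢ > 0`), each of which is again an
`n`-simplex. -/
theorem radial_subdivision
    {n : ℕ} (v : Fin (n + 1) → (Fin n → ℝ)) (hv : AffineIndependent ℝ v)
    (p : Fin n → ℝ) (hp : p ∈ convexHull ℝ (Set.range v)) (hpv : p ∉ Set.range v)
    (lam : Fin (n + 1) → ℝ) (hlam0 : ∀ i, 0 ≤ lam i) (hlam1 : ∑ i, lam i = 1)
    (hrep : p = ∑ i, lam i • v i) :
    (convexHull ℝ (Set.range v) =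
        ⋃ i ∈ {i | 0 < lam i}, convexHull ℝ (Set.range (Function.update v i p))) ∧
      (∀ i, 0 < lam i → AffineIndependent ℝ (Function.update v i p)) := by
  classical
  have htop : affineSpan ℝ (Set.range v) = ⊤ := by
    rw [hv.affineSpan_eq_top_iff_card_eq_finrank_add_one]
    simp
  let b : AffineBasis (Fin (n + 1)) ℝ (Fin n → ℝ) := ⟨v, hv, htop⟩
  have hbv : ⇑b = v := rfl
  have hcoordp : ∀ i, b.coord i p = lam i := by
    intro i
    have hpc : p = Finset.univ.affineCombination ℝ v lam := by
      rw [Finset.univ.affineCombination_eq_linear_combination v lam hlam1]; exact hrep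
    rw [hpc, ← hbv, b.coord_apply_combination_of_mem (Finset.mem_univ i) hlam1]
  have hM : ∀ i : Fin (n + 1), b.toMatrix (Function.update v i p) =
      (1 : Matrix (Fin (n + 1)) (Fin (n + 1)) ℝ).updateRow i lam := by
    intro i
    ext j k
    rcases eq_or_ne j i with rfl | hj
    · simp [AffineBasis.toMatrix_apply, Matrix.updateRow_self, hcoordp]
    · rw [Matrix.updateRow_ne hj]
      simp [AffineBasis.toMatrix_apply, Function.update_of_ne hj, ← hbv, b.coord_apply,
        Matrix.one_apply, eq_comm]
  have hdet : ∀ i, ((1 : Matrix (Fin (n + 1)) (Fin (n + 1)) ℝ).updateRow i lam).det = lam i := by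
    intro i
    have hl : lam = ∑ k, lam k • (1 : Matrix (Fin (n + 1)) (Fin (n + 1)) ℝ) k := by
      funext j
      simp [Finset.sum_apply, Matrix.one_apply, mul_ite, Finset.sum_ite_eq']
    rw [hl, Matrix.det_updateRow_sum]
    simp [Matrix.one_apply, mul_ite, Finset.sum_ite_eq, Finset.sum_ite_eq']
  have hind : ∀ i, 0 < lam i → AffineIndependent ℝ (Function.update v i p) ∧
      affineSpan ℝ (Set.range (Function.update v i p)) = ⊤ := by
    intro i hi
    rw [← b.isUnit_toMatrix_iff, Matrix.isUnit_iff_isUnit_det, hM i, hdet i, isUnit_iff_ne_zero]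
    exact hi.ne'
  have hsub : ∀ i, convexHull ℝ (Set.range (Function.update v i p)) ⊆
      convexHull ℝ (Set.range v) := by
    intro i
    apply convexHull_min _ (convex_convexHull ℝ _)
    rintro x ⟨j, rfl⟩
    rcases eq_or_ne j i with rfl | hj
    · rw [Function.update_self]; exact hp
    · rw [Function.update_of_ne hj]; exact subset_convexHull ℝ _ ⟨j, rfl⟩
  refine ⟨Set.Subset.antisymm ?_ (Set.iUnion₂_subset fun i _ => hsub i), fun i hi => (hind i hi).1⟩
  intro x hx
  set μ : Fin (n + 1) → ℝ := fun j => b.coord j x with hμ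
  have hμ0 : ∀ j, 0 ≤ μ j := by
    rw [← hbv, b.convexHull_eq_nonneg_coord] at hx
    exact hx
  have hμ1 : ∑ j, μ j = 1 := b.sum_coord_apply_eq_one x
  have hx_eq : ∑ j, μ j • v j = x := b.linear_combination_coord_eq_self x
  -- choose the index minimizing μ i / lam i among positive lam i
  have hs_ne : (Finset.univ.filter fun i => 0 < lam i).Nonempty := by
    by_contra h
    rw [Finset.not_nonempty_iff_eq_empty, Finset.filter_eq_empty_iff] at h
    have : ∀ i, lam i = 0 := fun i => le_antisymm (not_lt.mp (h (Finset.mem_univ i))) (hlam0 i)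
    simp [this] at hlam1
  obtain ⟨i, hi_mem, hi_min⟩ :=
    (Finset.univ.filter fun i => 0 < lam i).exists_min_image (fun j => μ j / lam j) hs_ne
  have hli : 0 < lam i := (Finset.mem_filter.mp hi_mem).2
  set t : ℝ := μ i / lam i with ht
  have ht0 : 0 ≤ t := div_nonneg (hμ0 i) hli.le
  have htlami : t * lam i = μ i := div_mul_cancel₀ _ hli.ne'
  set w : Fin (n + 1) → ℝ := Function.update (fun j => μ j - t * lam j) i t with hw
  have hw0 : ∀ j, 0 ≤ w j := by
    intro j
    rcases eq_or_ne j i with rfl | hj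
    · rw [hw, Function.update_self]; exact ht0
    · rw [hw, Function.update_of_ne hj]
      rcases (hlam0 j).lt_or_eq with hlj | hlj
      · have h3 := hi_min j (Finset.mem_filter.mpr ⟨Finset.mem_univ j, hlj⟩)
        have h4 : t * lam j ≤ μ j := (le_div_iff₀ hlj).mp h3
        linarith
      · rw [← hlj]
        simpa using hμ0 j
  have hsum_sub : ∀ f g : Fin (n + 1) → ℝ, ∑ j ∈ Finset.univ \ {i}, (f j - g j) =
      (∑ j, (f j - g j)) - (f i - g i) := by
    intro f g
    rw [Finset.sum_sdiff_eq_sub (Finset.singleton_subset_iff.mpr (Finset.mem_univ i))]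
    simp
  have hw1 : ∑ j, w j = 1 := by
    rw [hw, Finset.sum_update_of_mem (Finset.mem_univ i), hsum_sub]
    have h1 : ∑ j, (μ j - t * lam j) = 1 - t := by
      rw [Finset.sum_sub_distrib, hμ1, ← Finset.mul_sum, hlam1, mul_one]
    rw [h1, htlami]
    ring
  have hxw : ∑ j, w j • Function.update v i p j = x := by
    rw [hw, show (∑ j, Function.update (fun j => μ j - t * lam j) i t j •
        Function.update v i p j) = ∑ j, Function.update
        (fun j => (μ j - t * lam j) • v j) i (t • p) j from Finset.sum_congr rfl (by
      intro j _
      rcases eq_or_ne j i with rfl | hj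
      · simp
      · simp [Function.update_of_ne hj])]
    rw [Finset.sum_update_of_mem (Finset.mem_univ i)]
    have : ∑ j ∈ Finset.univ \ {i}, (μ j - t * lam j) • v j =
        (∑ j, (μ j - t * lam j) • v j) - (μ i - t * lam i) • v i := by
      rw [Finset.sum_sdiff_eq_sub (Finset.singleton_subset_iff.mpr (Finset.mem_univ i))]
      simp
    have h2 : ∑ j, (μ j - t * lam j) • v j = x - t • p := by
      simp only [sub_smul, mul_smul]
      rw [Finset.sum_sub_distrib, hx_eq, ← Finset.smul_sum, ← hrep]
    rw [this, h2, htlami, sub_self, zero_smul, sub_zero]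
    abel
  have hxmem : x ∈ convexHull ℝ (Set.range (Function.update v i p)) := by
    have hmem := Finset.univ.centerMass_mem_convexHull (w := w) (z := Function.update v i p)
      (fun j _ => hw0 j) (by rw [hw1]; norm_num) (fun j _ => Set.mem_range_self j)
    rwa [Finset.centerMass_eq_of_sum_1 _ _ hw1, hxw] at hmem
  exact Set.mem_biUnion (show i ∈ {i | 0 < lam i} from hli) hxmem
end
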